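/- Let G be the group with presentation ⟨x, y, z | x^{2^n} = 1, y^{2^m} = 1, z^{2^ℓ} = 1, [y,x] = z, [z,x] = z^{-2}, [z,y] = z^{-2}⟩ with n > m > ℓ ≥ 2. Then the centralizer C_G([G,G]) is abelian, generated by x², xy, y², z, and has exponent 2^n. -/

import Mathlib

/-!
The derived subgroup is `⟨z⟩`: each generator conjugates `z` to `z` or `z⁻¹`, so `⟨z⟩` is normal,
and modulo `⟨z⟩` the generators `x` and `y` commute. The subgroup `H = ⟨x², xy, y², z⟩` has
index at most two, every element lying in `H` or in `x⁻¹H`. The generators of `H` commute pairwise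
and with `z`, whereas the elements of `x⁻¹H` invert `z`, and `z² ≠ 1`. Hence
`C_G([G,G]) = C_G(z) = H`, an abelian group. Since `(xy)² = x²y²z⁻¹`, every generator of `H` has
order dividing `2ⁿ`; and `xy` has order exactly `2ⁿ`, as it maps to a generator of `ℤ/2ⁿ` under
`x ↦ 1, y ↦ 0, z ↦ 0`.
-/

open FreeGroup in
/-- Relators of G = G_⚀ = ⟨x,y,z | x^{2^n}=1, y^{2^m}=1, z^{2^ℓ}=1, [y,x]=z,
[z,x]=z⁻², [z,y]=z⁻²⟩, convention [y,x] = y⁻¹x⁻¹yx. Generators 0 ↦ x, 1 ↦ y, 2 ↦ z. -/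
def relsG1 (n m ℓ : ℕ) : Set (FreeGroup (Fin 3)) :=
  { (of 0) ^ (2 ^ n), (of 1) ^ (2 ^ m), (of 2) ^ (2 ^ ℓ),
    (of 1)⁻¹ * (of 0)⁻¹ * of 1 * of 0 * (of 2)⁻¹,
    (of 2)⁻¹ * (of 0)⁻¹ * of 2 * of 0 * (of 2) ^ 2,
    (of 2)⁻¹ * (of 1)⁻¹ * of 2 * of 1 * (of 2) ^ 2 }

abbrev G1 (n m ℓ : ℕ) := PresentedGroup (relsG1 n m ℓ)

section GroupLemmas

variable {G : Type*} [Group G]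

theorem semiconjBy_inv_of_relator {a b : G} (h : b⁻¹ * a⁻¹ * b * a * b ^ 2 = 1) :
    SemiconjBy a b b⁻¹ :=
  calc a * b = b⁻¹ * a * (b * (b⁻¹ * a⁻¹ * b * a * b ^ 2) * b⁻¹) := by group
    _ = b⁻¹ * a := by rw [h]; group

theorem semiconjBy_mul_of_relator {a b c : G} (h : b⁻¹ * a⁻¹ * b * a * c⁻¹ = 1) :
    SemiconjBy a (b * c) b :=
  calc a * (b * c) = a * b * ((b⁻¹ * a⁻¹ * b * a * c⁻¹)⁻¹ * (b⁻¹ * a⁻¹ * b * a)) := by group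
    _ = b * a := by rw [h]; group

theorem commute_mul_of_semiconjBy_inv {a a' b : G} (ha : SemiconjBy a b b⁻¹)
    (ha' : SemiconjBy a' b b⁻¹) : Commute (a * a') b := by
  have ha_inv : SemiconjBy a b⁻¹ b := by simpa using ha.inv_right
  exact ha_inv.mul_left ha'

theorem commute_sq_of_semiconjBy_mul {a b c : G} (h : SemiconjBy a (b * c) b)
    (hc : SemiconjBy b c c⁻¹) : Commute a (b ^ 2) := by
  have hcb : SemiconjBy b c⁻¹ c := by simpa using hc.inv_right
  have hsq : (b * c) ^ 2 = b ^ 2 := by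
    rw [sq, sq, mul_assoc, ← mul_assoc c, ← hcb.eq, mul_assoc, inv_mul_cancel, mul_one]
  exact hsq ▸ h.pow_right 2

theorem pow_two_pow_eq_one_of_le {M : Type*} [Monoid M] {a : M} {j k : ℕ} (ha : a ^ 2 ^ j = 1)
    (hjk : j ≤ k) : a ^ 2 ^ k = 1 := by
  obtain ⟨c, hc⟩ := pow_dvd_pow 2 hjk
  rw [hc, pow_mul, ha, one_pow]

theorem pow_eq_one_of_mem_closure {s : Set G} {k : ℕ} (hcomm : ∀ a ∈ s, ∀ b ∈ s, a * b = b * a)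
    (hpow : ∀ a ∈ s, a ^ k = 1) {g : G} (hg : g ∈ Subgroup.closure s) : g ^ k = 1 := by
  have := Subgroup.isMulCommutative_closure hcomm
  induction hg using Subgroup.closure_induction with
  | mem a ha => exact hpow a ha
  | one => exact one_pow k
  | mul a b ha hb iha ihb => rw [Commute.mul_pow (setLike_mul_comm ha hb), iha, ihb, one_mul]
  | inv a _ ih => rw [inv_pow, ih, inv_one]

theorem normal_zpowers_of_forall_semiconjBy {s : Set G} (hs : Subgroup.closure s = ⊤) {a : G}
    (h : ∀ g ∈ s, SemiconjBy g a a ∨ SemiconjBy g a a⁻¹) : (Subgroup.zpowers a).Normal := by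
  have hall : ∀ g : G, SemiconjBy g a a ∨ SemiconjBy g a a⁻¹ := by
    intro g
    have hg : g ∈ Subgroup.closure s := hs ▸ Subgroup.mem_top g
    induction hg using Subgroup.closure_induction with
    | mem g hg => exact h g hg
    | one => exact .inl (Commute.one_left a)
    | mul g g' _ _ ih ih' =>
      rcases ih with ih | ih <;> rcases ih' with ih' | ih'
      · exact .inl (ih.mul_left ih')
      · exact .inr (ih.inv_right.mul_left ih')
      · exact .inr (ih.mul_left ih')
      · exact .inl (by simpa using ih.inv_right.mul_left ih')
    | inv g _ ih =>
      rcases ih with ih | ih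
      · exact .inl (Commute.inv_left ih)
      · exact .inr (by simpa using ih.inv_symm_left.inv_right)
  refine ⟨fun b hb g => ?_⟩
  obtain ⟨k, rfl⟩ := Subgroup.mem_zpowers_iff.mp hb
  rcases hall g with hg | hg
  · rw [(hg.zpow_right k).eq, mul_inv_cancel_right]
    exact Subgroup.zpow_mem_zpowers a k
  · rw [(hg.zpow_right k).eq, mul_inv_cancel_right, inv_zpow']
    exact Subgroup.zpow_mem_zpowers a (-k)

theorem mem_or_mul_mem_of_closure_eq_top {s : Set G} (hs : Subgroup.closure s = ⊤)
    {H : Subgroup G} {a : G}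
    (h : ∀ t ∈ s, (t ∈ H ∧ a * t * a⁻¹ ∈ H) ∨ (a * t ∈ H ∧ t * a⁻¹ ∈ H)) (g : G) :
    g ∈ H ∨ a * g ∈ H := by
  have hg : g ∈ Subgroup.closure s := hs ▸ Subgroup.mem_top g
  induction hg using Subgroup.closure_induction_left with
  | one => exact .inl H.one_mem
  | mul_left t ht g _ ih =>
    rcases h t ht with ⟨ht, hat⟩ | ⟨hat, hta⟩ <;> rcases ih with hg | hg
    · exact .inl (H.mul_mem ht hg)
    · exact .inr (by simpa [mul_assoc] using H.mul_mem hat hg)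
    · exact .inr (by simpa [mul_assoc] using H.mul_mem hat hg)
    · exact .inl (by simpa [mul_assoc] using H.mul_mem hta hg)
  | inv_mul_cancel t ht g _ ih =>
    rcases h t ht with ⟨ht, hat⟩ | ⟨hat, hta⟩ <;> rcases ih with hg | hg
    · exact .inl (H.mul_mem (H.inv_mem ht) hg)
    · exact .inr (by simpa [mul_assoc] using H.mul_mem (H.inv_mem hat) hg)
    · exact .inr (by simpa [mul_assoc] using H.mul_mem (H.inv_mem hta) hg)
    · exact .inl (by simpa [mul_assoc] using H.mul_mem (H.inv_mem hat) hg)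

theorem commutator_le_of_closure_eq_top {s : Set G} (hs : Subgroup.closure s = ⊤)
    {N : Subgroup G} [N.Normal] (h : ∀ a ∈ s, ∀ b ∈ s, (a * b : G ⧸ N) = b * a) :
    commutator G ≤ N := by
  rw [← Subgroup.Normal.quotient_commutative_iff_commutator_le]
  set T : Set (G ⧸ N) := QuotientGroup.mk' N '' s
  have hT : Subgroup.closure T = ⊤ := by
    rw [← MonoidHom.map_closure, hs,
      Subgroup.map_top_of_surjective _ (QuotientGroup.mk'_surjective N)]
  have : IsMulCommutative (Subgroup.closure T) := by
    refine Subgroup.isMulCommutative_closure ?_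
    rintro - ⟨a, ha, rfl⟩ - ⟨b, hb, rfl⟩
    exact h a ha b hb
  exact ⟨⟨fun p q => setLike_mul_comm (hT ▸ Subgroup.mem_top p) (hT ▸ Subgroup.mem_top q)⟩⟩

end GroupLemmas

namespace G1

variable {n m ℓ : ℕ}

local notation "X" => (PresentedGroup.of (rels := relsG1 n m ℓ) 0)
local notation "Y" => (PresentedGroup.of (rels := relsG1 n m ℓ) 1)
local notation "Z" => (PresentedGroup.of (rels := relsG1 n m ℓ) 2)

theorem x_pow_eq_one : X ^ 2 ^ n = 1 := by
  have h := PresentedGroup.one_of_mem (rels := relsG1 n m ℓ) (x := .of 0 ^ 2 ^ n) (by simp [relsG1])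
  rwa [map_pow] at h

theorem y_pow_eq_one : Y ^ 2 ^ m = 1 := by
  have h := PresentedGroup.one_of_mem (rels := relsG1 n m ℓ) (x := .of 1 ^ 2 ^ m) (by simp [relsG1])
  rwa [map_pow] at h

theorem z_pow_eq_one : Z ^ 2 ^ ℓ = 1 := by
  have h := PresentedGroup.one_of_mem (rels := relsG1 n m ℓ) (x := .of 2 ^ 2 ^ ℓ) (by simp [relsG1])
  rwa [map_pow] at h

theorem semiconjBy_x_yz : SemiconjBy X (Y * Z) Y := by
  have h := PresentedGroup.one_of_mem (rels := relsG1 n m ℓ)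
    (x := (.of 1)⁻¹ * (.of 0)⁻¹ * .of 1 * .of 0 * (.of 2)⁻¹) (by simp [relsG1])
  simp only [map_mul, map_inv] at h
  exact semiconjBy_mul_of_relator h

theorem semiconjBy_x_z : SemiconjBy X Z Z⁻¹ := by
  have h := PresentedGroup.one_of_mem (rels := relsG1 n m ℓ)
    (x := (.of 2)⁻¹ * (.of 0)⁻¹ * .of 2 * .of 0 * .of 2 ^ 2) (by simp [relsG1])
  simp only [map_mul, map_inv, map_pow] at h
  exact semiconjBy_inv_of_relator h

theorem semiconjBy_y_z : SemiconjBy Y Z Z⁻¹ := by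
  have h := PresentedGroup.one_of_mem (rels := relsG1 n m ℓ)
    (x := (.of 2)⁻¹ * (.of 1)⁻¹ * .of 2 * .of 1 * .of 2 ^ 2) (by simp [relsG1])
  simp only [map_mul, map_inv, map_pow] at h
  exact semiconjBy_inv_of_relator h

theorem closure_xyz_eq_top : Subgroup.closure {X, Y, Z} = ⊤ := by
  rw [← PresentedGroup.closure_range_of]
  congr 1
  ext g
  simp [Fin.exists_fin_succ, eq_comm]

open DihedralGroup in
/- In the dihedral group of order 16, `x ↦ s`, `y ↦ sr` gives `[y, x] = r⁻²`, of order 4. -/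
theorem z_sq_ne_one (hn : 1 ≤ n) (hm : 1 ≤ m) (hℓ : 2 ≤ ℓ) : Z ^ 2 ≠ 1 := by
  let f : Fin 3 → DihedralGroup 8 := ![sr 0, sr 1, r 6]
  have hf : ∀ r ∈ relsG1 n m ℓ, FreeGroup.lift f r = 1 := by
    simp only [relsG1, Set.mem_insert_iff, Set.mem_singleton_iff]
    rintro _ (rfl | rfl | rfl | rfl | rfl | rfl) <;>
      simp only [map_mul, map_inv, map_pow, FreeGroup.lift_apply_of]
    · exact pow_two_pow_eq_one_of_le (by decide : f 0 ^ 2 ^ 1 = 1) hn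
    · exact pow_two_pow_eq_one_of_le (by decide : f 1 ^ 2 ^ 1 = 1) hm
    · exact pow_two_pow_eq_one_of_le (by decide : f 2 ^ 2 ^ 2 = 1) hℓ
    all_goals decide
  intro h
  have h' := congrArg (PresentedGroup.toGroup hf) h
  rw [map_pow, map_one, PresentedGroup.toGroup.of] at h'
  exact absurd h' (by decide)

theorem two_pow_dvd_orderOf_xy : 2 ^ n ∣ orderOf (X * Y) := by
  let f : Fin 3 → Multiplicative (ZMod (2 ^ n)) := ![.ofAdd 1, 1, 1]
  have hf : ∀ r ∈ relsG1 n m ℓ, FreeGroup.lift f r = 1 := by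
    simp only [relsG1, Set.mem_insert_iff, Set.mem_singleton_iff]
    rintro _ (rfl | rfl | rfl | rfl | rfl | rfl) <;> simp [f, ← ofAdd_nsmul]
  have := orderOf_map_dvd (PresentedGroup.toGroup hf) (X * Y)
  simpa [f, PresentedGroup.toGroup.of, orderOf_ofAdd_eq_addOrderOf] using this

local notation "S" => ({X ^ 2, X * Y, Y ^ 2, Z} : Set (G1 n m ℓ))

theorem commute_z_of_mem_gens : ∀ a ∈ S, Commute a Z := by
  rintro a (rfl | rfl | rfl | rfl)
  · exact sq X ▸ commute_mul_of_semiconjBy_inv semiconjBy_x_z semiconjBy_x_z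
  · exact commute_mul_of_semiconjBy_inv semiconjBy_x_z semiconjBy_y_z
  · exact sq Y ▸ commute_mul_of_semiconjBy_inv semiconjBy_y_z semiconjBy_y_z
  · exact Commute.refl Z

theorem commute_y_x_sq : Commute Y (X ^ 2) := by
  refine commute_sq_of_semiconjBy_mul ?_ semiconjBy_x_z.inv_right
  rw [SemiconjBy, ← mul_assoc, ← semiconjBy_x_yz.eq]
  group

theorem commute_x_y_sq : Commute X (Y ^ 2) :=
  commute_sq_of_semiconjBy_mul semiconjBy_x_yz semiconjBy_y_z

theorem gens_pairwise_commute : ∀ a ∈ S, ∀ b ∈ S, a * b = b * a := by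
  have h₁ : Commute (X ^ 2) (X * Y) := (Commute.self_pow X 2).symm.mul_right commute_y_x_sq.symm
  have h₂ : Commute (X ^ 2) (Y ^ 2) := commute_y_x_sq.symm.pow_right 2
  have h₃ : Commute (X * Y) (Y ^ 2) := commute_x_y_sq.mul_left (Commute.self_pow Y 2)
  have h₄ := commute_z_of_mem_gens (n := n) (m := m) (ℓ := ℓ) (X ^ 2) (by simp)
  have h₅ := commute_z_of_mem_gens (n := n) (m := m) (ℓ := ℓ) (X * Y) (by simp)
  have h₆ := commute_z_of_mem_gens (n := n) (m := m) (ℓ := ℓ) (Y ^ 2) (by simp)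
  rintro a (rfl | rfl | rfl | rfl) b (rfl | rfl | rfl | rfl) <;>
    first | exact Commute.refl _ | assumption | exact Commute.symm ‹_›

theorem xy_sq : (X * Y) ^ 2 = X ^ 2 * Y ^ 2 * Z⁻¹ := by
  have hzy : Z * Y = Y * Z⁻¹ := by simpa using semiconjBy_y_z.inv_right.eq.symm
  calc (X * Y) ^ 2 = X * (Y * X) * Y := by simp only [sq, mul_assoc]
    _ = X ^ 2 * Y * (Z * Y) := by simp only [← semiconjBy_x_yz.eq, sq, mul_assoc]
    _ = X ^ 2 * Y ^ 2 * Z⁻¹ := by simp only [hzy, sq, mul_assoc]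

open scoped commutatorElement in
theorem commutator_eq_zpowers_z : commutator (G1 n m ℓ) = Subgroup.zpowers Z := by
  apply le_antisymm
  · have : (Subgroup.zpowers Z).Normal := by
      refine normal_zpowers_of_forall_semiconjBy closure_xyz_eq_top ?_
      rintro g (rfl | rfl | rfl)
      exacts [.inr semiconjBy_x_z, .inr semiconjBy_y_z, .inl (Commute.refl Z)]
    have hz : (Z : G1 n m ℓ ⧸ Subgroup.zpowers Z) = 1 :=
      (QuotientGroup.eq_one_iff _).mpr (Subgroup.mem_zpowers Z)
    have hxy : (X * Y : G1 n m ℓ ⧸ Subgroup.zpowers Z) = Y * X := by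
      simpa [hz] using
        congrArg ((↑) : G1 n m ℓ → G1 n m ℓ ⧸ Subgroup.zpowers Z) semiconjBy_x_yz.eq
    refine commutator_le_of_closure_eq_top closure_xyz_eq_top ?_
    rintro a (rfl | rfl | rfl) b (rfl | rfl | rfl) <;> simp [hz, hxy]
  · rw [Subgroup.zpowers_le, commutator_def]
    -- Mathlib's `⁅a, b⁆` is `a * b * a⁻¹ * b⁻¹`: the paper's `[y, x] = y⁻¹x⁻¹yx` is `⁅y⁻¹, x⁻¹⁆`.
    have hz : ⁅Y⁻¹, X⁻¹⁆ = Z := by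
      rw [commutatorElement_def, inv_inv, inv_inv, mul_assoc _ Y X, ← semiconjBy_x_yz.eq]
      group
    exact hz ▸ Subgroup.commutator_mem_commutator (Subgroup.mem_top _) (Subgroup.mem_top _)

theorem closure_gens_le_centralizer_z : Subgroup.closure S ≤ Subgroup.centralizer {Z} :=
  Subgroup.closure_le _ |>.mpr fun a ha =>
    Subgroup.mem_centralizer_singleton_iff.mpr (commute_z_of_mem_gens a ha).eq

theorem centralizer_z_eq (hn : 1 ≤ n) (hm : 1 ≤ m) (hℓ : 2 ≤ ℓ) :
    Subgroup.centralizer {Z} = Subgroup.closure S := by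
  refine le_antisymm (fun u hu => ?_) closure_gens_le_centralizer_z
  have hcover : ∀ t ∈ ({X, Y, Z} : Set (G1 n m ℓ)),
      (t ∈ Subgroup.closure S ∧ X * t * X⁻¹ ∈ Subgroup.closure S) ∨
        (X * t ∈ Subgroup.closure S ∧ t * X⁻¹ ∈ Subgroup.closure S) := by
    have hmem : ∀ a ∈ S, a ∈ Subgroup.closure S := fun a ha => Subgroup.subset_closure ha
    rintro t (rfl | rfl | rfl)
    · exact .inr ⟨sq X ▸ hmem _ (by simp), by simp⟩
    · refine .inr ⟨hmem _ (by simp), ?_⟩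
      have hyx : Y * X⁻¹ = Y ^ 2 * (X * Y)⁻¹ := by group
      exact hyx ▸ mul_mem (hmem _ (by simp)) (inv_mem (hmem _ (by simp)))
    · refine .inl ⟨hmem _ (by simp), ?_⟩
      rw [semiconjBy_x_z.eq, mul_inv_cancel_right]
      exact inv_mem (hmem _ (by simp))
  refine (mem_or_mul_mem_of_closure_eq_top closure_xyz_eq_top hcover u).resolve_right fun hxu => ?_
  have hu' : Commute u Z := Subgroup.mem_centralizer_singleton_iff.mp hu
  have hxu' : Commute (X * u) Z :=
    Subgroup.mem_centralizer_singleton_iff.mp (closure_gens_le_centralizer_z hxu)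
  have hx : Commute X Z := by simpa using hxu'.mul_left hu'.inv_left
  apply z_sq_ne_one hn hm hℓ
  have hz : Z = Z⁻¹ := mul_right_cancel (hx.eq.symm.trans semiconjBy_x_z.eq)
  rw [sq, ← mul_inv_cancel Z, ← hz]

theorem xy_pow_eq_one (hm : m ≤ n) (hℓ : ℓ < n) : (X * Y) ^ 2 ^ n = 1 := by
  obtain ⟨k, rfl⟩ : ∃ k, n = k + 1 := ⟨n - 1, by omega⟩
  have hxy := commute_y_x_sq (n := k + 1) (m := m) (ℓ := ℓ) |>.symm.pow_right 2
  have hz := commute_z_of_mem_gens (n := k + 1) (m := m) (ℓ := ℓ)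
  rw [pow_succ', pow_mul, xy_sq,
    ((hz _ (by simp)).mul_left (hz _ (by simp))).inv_right.mul_pow, hxy.mul_pow, ← pow_mul,
    ← pow_mul, ← pow_succ', x_pow_eq_one, pow_two_pow_eq_one_of_le y_pow_eq_one hm, inv_pow,
    pow_two_pow_eq_one_of_le z_pow_eq_one (by omega)]
  simp

theorem exponent_closure_gens (hm : m ≤ n) (hℓ : ℓ < n) :
    Monoid.exponent (Subgroup.closure S) = 2 ^ n := by
  refine Nat.dvd_antisymm (Monoid.exponent_dvd_of_forall_pow_eq_one fun g => ?_) ?_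
  · refine Subtype.ext (pow_eq_one_of_mem_closure gens_pairwise_commute ?_ g.2)
    rintro a (rfl | rfl | rfl | rfl)
    · rw [pow_right_comm, x_pow_eq_one, one_pow]
    · exact xy_pow_eq_one hm hℓ
    · rw [pow_right_comm, pow_two_pow_eq_one_of_le y_pow_eq_one hm, one_pow]
    · exact pow_two_pow_eq_one_of_le z_pow_eq_one hℓ.le
  · have hxy : X * Y ∈ Subgroup.closure S := Subgroup.subset_closure (by simp)
    have h := Monoid.order_dvd_exponent (⟨X * Y, hxy⟩ : Subgroup.closure S)
    rw [Subgroup.orderOf_mk] at h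
    exact two_pow_dvd_orderOf_xy.trans h

theorem centralizer_commutator_eq (hn : 1 ≤ n) (hm : 1 ≤ m) (hℓ : 2 ≤ ℓ) :
    Subgroup.centralizer (commutator (G1 n m ℓ) : Set (G1 n m ℓ)) = Subgroup.closure S := by
  rw [commutator_eq_zpowers_z, Subgroup.zpowers_eq_closure, Subgroup.centralizer_closure,
    centralizer_z_eq hn hm hℓ]

end G1

theorem stmt5 (n m ℓ : ℕ) (hℓ : 2 ≤ ℓ) (hmℓ : ℓ < m) (hnm : m < n) :
    Subgroup.centralizer ((commutator (G1 n m ℓ) : Subgroup (G1 n m ℓ)) : Set (G1 n m ℓ)) =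
      Subgroup.closure {(PresentedGroup.of 0 : G1 n m ℓ) ^ 2,
        PresentedGroup.of 0 * PresentedGroup.of 1,
        (PresentedGroup.of 1 : G1 n m ℓ) ^ 2, PresentedGroup.of 2} ∧
    (∀ u ∈ Subgroup.centralizer ((commutator (G1 n m ℓ) : Subgroup (G1 n m ℓ)) : Set (G1 n m ℓ)),
      ∀ v ∈ Subgroup.centralizer ((commutator (G1 n m ℓ) : Subgroup (G1 n m ℓ)) : Set (G1 n m ℓ)),
        u * v = v * u) ∧
    Monoid.exponent
      (Subgroup.centralizer ((commutator (G1 n m ℓ) : Subgroup (G1 n m ℓ)) : Set (G1 n m ℓ))) =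
      2 ^ n := by
  have hC := G1.centralizer_commutator_eq (n := n) (m := m) (by omega) (by omega) hℓ
  have := Subgroup.isMulCommutative_closure (G1.gens_pairwise_commute (n := n) (m := m) (ℓ := ℓ))
  refine ⟨hC, fun u hu v hv => ?_, ?_⟩
  · rw [hC] at hu hv
    exact setLike_mul_comm hu hv
  · rw [hC]
    exact G1.exponent_closure_gens hnm.le (by omega)
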